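/- Let Φ be an n×d matrix, y = Φx* with supp(x*) = s* ⊆ p for an index set p with |p| ≤ m + ℓ and δ_{m+ℓ} < 1/2. Let x̂ be the least-squares estimate of y supported on p. Then for every i ∈ p with i ∈ s*: if x*_i ≠ 0, then x̂_i ≠ 0; specifically, |Φ_iᵀ(I − P{Φ_{p∖{i}}})Φ_i x*_i| ≥ (1 − δ_{m+ℓ}²/(1 − δ_{m+ℓ})) |x*_i| > 0. -/

import Mathlib

open Matrix Finset

noncomputable section

/-- Number of nonzero entries of a vector. -/
def sparsity {d : ℕ} (x : Fin d → ℝ) : ℕ :=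
  (Finset.univ.filter fun i => x i ≠ 0).card

/-- Squared Euclidean norm. -/
def nsq {k : Type*} [Fintype k] (v : k → ℝ) : ℝ := ∑ i, v i ^ 2

/-- Euclidean (ℓ₂) norm. -/
def l2 {k : Type*} [Fintype k] (v : k → ℝ) : ℝ := Real.sqrt (nsq v)

/-- `Φ` satisfies the order-`t` restricted isometry property with constant `δ`. -/
def satRIP {n d : ℕ} (Φ : Matrix (Fin n) (Fin d) ℝ) (t : ℕ) (δ : ℝ) : Prop :=
  ∀ x : Fin d → ℝ, sparsity x ≤ t →
    (1 - δ) * nsq x ≤ nsq (Φ.mulVec x) ∧ nsq (Φ.mulVec x) ≤ (1 + δ) * nsq x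

/-- The order-`t` RIP constant of `Φ` : the smallest `δ ≥ 0` satisfying the RIP bounds. -/
def ripConst {n d : ℕ} (Φ : Matrix (Fin n) (Fin d) ℝ) (t : ℕ) : ℝ :=
  sInf {δ : ℝ | 0 ≤ δ ∧ satRIP Φ t δ}

/-- The submatrix of `Φ` consisting of the columns indexed by `s`. -/
def cols {n d : ℕ} (Φ : Matrix (Fin n) (Fin d) ℝ) (s : Finset (Fin d)) :
    Matrix (Fin n) {i // i ∈ s} ℝ := Φ.submatrix id (fun i => (i : Fin d))

/-- Orthogonal projection `P{Φ_s} = Φ_s (Φ_sᵀ Φ_s)⁻¹ Φ_sᵀ` onto the column span of `Φ_s`. -/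
def proj {n d : ℕ} (Φ : Matrix (Fin n) (Fin d) ℝ) (s : Finset (Fin d)) :
    Matrix (Fin n) (Fin n) ℝ :=
  cols Φ s * ((cols Φ s)ᵀ * cols Φ s)⁻¹ * (cols Φ s)ᵀ

/-- Least-squares residual `v^{⊥s} = (I - P{Φ_s}) v`. -/
def residVec {n d : ℕ} (Φ : Matrix (Fin n) (Fin d) ℝ) (s : Finset (Fin d)) (y : Fin n → ℝ) :
    Fin n → ℝ := y - (proj Φ s).mulVec y

/-- The `i`-th column of `Φ`. -/
def col {n d : ℕ} (Φ : Matrix (Fin n) (Fin d) ℝ) (i : Fin d) : Fin n → ℝ := fun k => Φ k i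

/-- `x` is a least-squares estimate of `y` supported on `s`:
it is supported on `s` and minimizes `‖y - Φ z‖₂` over all `z` supported on `s`. -/
def leastSq {n d : ℕ} (Φ : Matrix (Fin n) (Fin d) ℝ) (y : Fin n → ℝ) (s : Finset (Fin d))
    (x : Fin d → ℝ) : Prop :=
  (∀ i, i ∉ s → x i = 0) ∧
  ∀ z : Fin d → ℝ, (∀ i, i ∉ s → z i = 0) → nsq (y - Φ.mulVec x) ≤ nsq (y - Φ.mulVec z)

/-- The support of a vector, as a `Finset`. -/
def spt {d : ℕ} (x : Fin d → ℝ) : Finset (Fin d) :=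
  Finset.univ.filter fun i => x i ≠ 0

/-!
Write `δ = δ_{m+ℓ}`, `r = p ∖ {i}`, `G = Φ_rᵀ Φ_r`. Since `δ < 1`, `Φ` is injective on
`(m+ℓ)`-sparse vectors, so the least-squares fit on `p ⊇ supp x*` recovers `x*` exactly.
For the bound, `Φᵢᵀ (I − P) Φᵢ = 1 − τ` where `τ = Φᵢᵀ P Φᵢ = ⟨Φᵢ, Φ_r c⟩ = ‖Φ_r c‖²` with
`c = G⁻¹ Φ_rᵀ Φᵢ`. The lower RIP bound gives `τ ≥ (1 − δ) ‖c‖²`, and polarizing the RIP shows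
that `Φᵢ` is nearly orthogonal to the columns of `Φ_r`: `τ² ≤ δ² ‖c‖²`. Hence
`τ ≤ δ² / (1 − δ)`, which is `< 1` as soon as `δ < 1/2`.
-/

section Nsq

variable {k : Type*} [Fintype k]

lemma nsq_nonneg (v : k → ℝ) : 0 ≤ nsq v :=
  Finset.sum_nonneg fun _ _ => sq_nonneg _

lemma nsq_eq_zero {v : k → ℝ} : nsq v = 0 ↔ v = 0 := by
  simp [nsq, Finset.sum_eq_zero_iff_of_nonneg fun i _ => sq_nonneg (v i), funext_iff]

lemma dotProduct_self_eq_nsq (v : k → ℝ) : v ⬝ᵥ v = nsq v := by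
  simp [dotProduct, nsq, sq]

lemma nsq_add (u v : k → ℝ) :
    nsq (u + v) = nsq u + 2 * (u ⬝ᵥ v) + nsq v := by
  simp only [← dotProduct_self_eq_nsq, add_dotProduct, dotProduct_add, dotProduct_comm v u]
  ring

lemma nsq_sub (u v : k → ℝ) :
    nsq (u - v) = nsq u - 2 * (u ⬝ᵥ v) + nsq v := by
  simp only [← dotProduct_self_eq_nsq, sub_dotProduct, dotProduct_sub, dotProduct_comm v u]
  ring

lemma nsq_single [DecidableEq k] (i : k) (a : ℝ) :
    nsq (Pi.single i a) = a ^ 2 := by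
  rw [← dotProduct_self_eq_nsq, single_dotProduct, Pi.single_eq_same, sq]

end Nsq

lemma sparsity_le_card {d : ℕ} {x : Fin d → ℝ} {s : Finset (Fin d)}
    (hx : ∀ j, j ∉ s → x j = 0) : sparsity x ≤ s.card :=
  Finset.card_le_card fun j hj => by
    by_contra hjs
    exact (Finset.mem_filter.1 hj).2 (hx j hjs)

lemma sq_le_of_forall_two_mul_le {w N δ : ℝ} (hδ : 0 ≤ δ)
    (h : ∀ a, 2 * a * w ≤ δ * (a ^ 2 + N)) : w ^ 2 ≤ δ ^ 2 * N := by
  rcases hδ.eq_or_lt with rfl | hδ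
  · nlinarith [h w]
  · have := mul_le_mul_of_nonneg_left (h (w / δ)) hδ.le
    have hlhs : δ * (2 * (w / δ) * w) = 2 * w ^ 2 := by field_simp
    have hrhs : δ * (δ * ((w / δ) ^ 2 + N)) = w ^ 2 + δ ^ 2 * N := by field_simp
    linarith

section RIP

variable {n d : ℕ} {Φ : Matrix (Fin n) (Fin d) ℝ} {t : ℕ} {δ : ℝ}

-- The witness is `1 + ‖Φ‖_F²`, by Cauchy–Schwarz row by row.
lemma setOf_satRIP_nonempty (Φ : Matrix (Fin n) (Fin d) ℝ) (t : ℕ) :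
    {δ : ℝ | 0 ≤ δ ∧ satRIP Φ t δ}.Nonempty := by
  set C := ∑ k, ∑ j, Φ k j ^ 2
  have hC : 0 ≤ C := Finset.sum_nonneg fun _ _ => Finset.sum_nonneg fun _ _ => sq_nonneg _
  have hbound (x : Fin d → ℝ) : nsq (Φ *ᵥ x) ≤ C * nsq x := by
    rw [Finset.sum_mul]
    exact Finset.sum_le_sum fun k _ => Finset.sum_mul_sq_le_sq_mul_sq univ (fun j => Φ k j) x
  refine ⟨1 + C, by linarith, fun x _ => ⟨?_, ?_⟩⟩
  · nlinarith [nsq_nonneg (Φ *ᵥ x), nsq_nonneg x]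
  · nlinarith [hbound x, nsq_nonneg x]

lemma ripConst_nonneg (Φ : Matrix (Fin n) (Fin d) ℝ) (t : ℕ) : 0 ≤ ripConst Φ t :=
  le_csInf (setOf_satRIP_nonempty Φ t) fun _ hδ => hδ.1

-- Each RIP inequality at a fixed `x` is a lower bound on `δ`, so it survives the infimum.
lemma satRIP_ripConst (Φ : Matrix (Fin n) (Fin d) ℝ) (t : ℕ) : satRIP Φ t (ripConst Φ t) := by
  intro x hx
  rcases (nsq_nonneg x).eq_or_lt with h0 | hpos
  · rw [eq_comm, nsq_eq_zero] at h0
    simp [h0, nsq]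
  have hlower (f : ℝ → ℝ) (hf : ∀ δ, 0 ≤ δ ∧ satRIP Φ t δ → f δ ≤ 0)
      (hlin : ∀ δ, f δ = f 0 - δ * nsq x) : f (ripConst Φ t) ≤ 0 := by
    have : f 0 / nsq x ≤ ripConst Φ t :=
      le_csInf (setOf_satRIP_nonempty Φ t) fun δ hδ => by
        rw [div_le_iff₀ hpos]; linarith [hf δ hδ, hlin δ]
    rw [div_le_iff₀ hpos] at this
    linarith [hlin (ripConst Φ t)]
  constructor
  · have := hlower (fun δ => (1 - δ) * nsq x - nsq (Φ *ᵥ x))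
      (fun δ hδ => by linarith [(hδ.2 x hx).1]) (fun δ => by ring)
    linarith
  · have := hlower (fun δ => nsq (Φ *ᵥ x) - (1 + δ) * nsq x)
      (fun δ hδ => by linarith [(hδ.2 x hx).2]) (fun δ => by ring)
    linarith

namespace satRIP

lemma eq_zero_of_mulVec_eq_zero (hΦ : satRIP Φ t δ) (hδ : δ < 1) {x : Fin d → ℝ}
    (hx : sparsity x ≤ t) (h : Φ *ᵥ x = 0) : x = 0 := by
  have hle := (hΦ x hx).1
  rw [h, nsq_eq_zero.2 rfl] at hle
  rw [← nsq_eq_zero]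
  nlinarith [nsq_nonneg x]

-- Polarization: subtract the lower RIP bound for `u - v` from the upper one for `u + v`.
lemma two_mul_dotProduct_le (hΦ : satRIP Φ t δ) {u v : Fin d → ℝ} (huv : u ⬝ᵥ v = 0)
    (s : Finset (Fin d)) (hs : s.card ≤ t) (hu : ∀ j, j ∉ s → u j = 0)
    (hv : ∀ j, j ∉ s → v j = 0) :
    2 * (Φ *ᵥ u ⬝ᵥ Φ *ᵥ v) ≤ δ * (nsq u + nsq v) := by
  have hadd := (hΦ (u + v) (le_trans (sparsity_le_card fun j hj => by
    simp [hu j hj, hv j hj]) hs)).2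
  have hsub := (hΦ (u - v) (le_trans (sparsity_le_card fun j hj => by
    simp [hu j hj, hv j hj]) hs)).1
  rw [mulVec_add, nsq_add, nsq_add, huv] at hadd
  rw [mulVec_sub, nsq_sub, nsq_sub, huv] at hsub
  linarith

end satRIP

lemma leastSq.eq_of_satRIP {xs xh : Fin d → ℝ} {p : Finset (Fin d)}
    (hx : leastSq Φ (Φ *ᵥ xs) p xh) (hΦ : satRIP Φ t δ) (hδ : δ < 1) (hp : p.card ≤ t)
    (hxs : ∀ j, j ∉ p → xs j = 0) : xh = xs := by
  have hfit : nsq (Φ *ᵥ xs - Φ *ᵥ xh) = 0 :=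
    le_antisymm (by simpa [nsq] using hx.2 xs hxs) (nsq_nonneg _)
  rw [nsq_eq_zero, ← mulVec_sub] at hfit
  have hsp : sparsity (xs - xh) ≤ t :=
    le_trans (sparsity_le_card fun j hj => by simp [hxs j hj, hx.1 j hj]) hp
  exact (sub_eq_zero.1 (hΦ.eq_zero_of_mulVec_eq_zero hδ hsp hfit)).symm

end RIP

def zeroExtend {d : ℕ} (s : Finset (Fin d)) (c : {j // j ∈ s} → ℝ) : Fin d → ℝ :=
  fun j => if h : j ∈ s then c ⟨j, h⟩ else 0

section ZeroExtend

variable {d : ℕ} (s : Finset (Fin d)) (c : {j // j ∈ s} → ℝ)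

lemma zeroExtend_of_notMem {j : Fin d} (hj : j ∉ s) : zeroExtend s c j = 0 := dif_neg hj

lemma sum_zeroExtend (g : Fin d → ℝ → ℝ) (hg : ∀ j, g j 0 = 0) :
    ∑ j, g j (zeroExtend s c j) = ∑ j : {j // j ∈ s}, g j (c j) := by
  rw [← Finset.sum_subset (Finset.subset_univ s) fun j _ hj => by
    rw [zeroExtend_of_notMem s c hj, hg], ← Finset.sum_coe_sort]
  exact Finset.sum_congr rfl fun j _ => by rw [zeroExtend, dif_pos j.2]

lemma mulVec_zeroExtend {n : ℕ} (Φ : Matrix (Fin n) (Fin d) ℝ) :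
    Φ *ᵥ zeroExtend s c = cols Φ s *ᵥ c :=
  funext fun k => sum_zeroExtend s c (fun j a => Φ k j * a) fun _ => mul_zero _

lemma nsq_zeroExtend : nsq (zeroExtend s c) = nsq c :=
  sum_zeroExtend s c (fun _ a => a ^ 2) fun _ => zero_pow two_ne_zero

end ZeroExtend

section Projection

variable {n d : ℕ} {Φ : Matrix (Fin n) (Fin d) ℝ} {t : ℕ} {δ : ℝ}

lemma satRIP.le_nsq_cols_mulVec (hΦ : satRIP Φ t δ) {s : Finset (Fin d)} (hs : s.card ≤ t)
    (c : {j // j ∈ s} → ℝ) : (1 - δ) * nsq c ≤ nsq (cols Φ s *ᵥ c) := by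
  simpa only [nsq_zeroExtend, mulVec_zeroExtend] using
    (hΦ _ (le_trans (sparsity_le_card fun j => zeroExtend_of_notMem s c) hs)).1

lemma satRIP.posDef_gram (hΦ : satRIP Φ t δ) (hδ : δ < 1) {s : Finset (Fin d)}
    (hs : s.card ≤ t) : ((cols Φ s)ᵀ * cols Φ s).PosDef := by
  rw [← conjTranspose_eq_transpose_of_trivial]
  refine .conjTranspose_mul_self _ fun a b hab => ?_
  have hzero : nsq (cols Φ s *ᵥ (a - b)) = 0 := by
    rw [mulVec_sub, hab, sub_self, nsq_eq_zero]
  have := hΦ.le_nsq_cols_mulVec hs (a - b)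
  rw [← sub_eq_zero, ← nsq_eq_zero]
  nlinarith [nsq_nonneg (a - b)]

-- Polarization for `Pi.single i a` and `zeroExtend s c`, optimized over `a`.
lemma satRIP.sq_col_dotProduct_le (hΦ : satRIP Φ t δ) (hδ : 0 ≤ δ) {i : Fin d}
    {s : Finset (Fin d)} (hi : i ∉ s) (hs : (insert i s).card ≤ t) (c : {j // j ∈ s} → ℝ) :
    (_root_.col Φ i ⬝ᵥ cols Φ s *ᵥ c) ^ 2 ≤ δ ^ 2 * nsq c := by
  refine sq_le_of_forall_two_mul_le hδ fun a => ?_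
  have horth : Pi.single i a ⬝ᵥ zeroExtend s c = 0 := by
    rw [single_dotProduct, zeroExtend_of_notMem s c hi, mul_zero]
  have := hΦ.two_mul_dotProduct_le horth (insert i s) hs
    (fun j hj => Pi.single_eq_of_ne (fun h => hj (Finset.mem_insert.2 (Or.inl h))) _) fun j hj =>
      zeroExtend_of_notMem s c fun hjs => hj (Finset.mem_insert_of_mem hjs)
  rwa [nsq_single, nsq_zeroExtend, mulVec_zeroExtend, mulVec_single, smul_dotProduct,
    op_smul_eq_smul, smul_eq_mul, ← mul_assoc] at this

lemma dotProduct_proj_mulVec (s : Finset (Fin d)) (y : Fin n → ℝ) :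
    y ⬝ᵥ proj Φ s *ᵥ y =
      y ⬝ᵥ cols Φ s *ᵥ (((cols Φ s)ᵀ * cols Φ s)⁻¹ *ᵥ (cols Φ s)ᵀ *ᵥ y) := by
  rw [proj, ← mulVec_mulVec, ← mulVec_mulVec]

-- With `c = G⁻¹ Aᵀ y` one has `G c = Aᵀ y`, so `⟨y, A c⟩ = ⟨Aᵀ y, c⟩ = ⟨G c, c⟩ = ‖A c‖²`.
lemma dotProduct_proj_mulVec_eq_nsq {s : Finset (Fin d)}
    (hG : IsUnit ((cols Φ s)ᵀ * cols Φ s).det) (y : Fin n → ℝ) :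
    y ⬝ᵥ proj Φ s *ᵥ y =
      nsq (cols Φ s *ᵥ (((cols Φ s)ᵀ * cols Φ s)⁻¹ *ᵥ (cols Φ s)ᵀ *ᵥ y)) := by
  set A := cols Φ s
  set c := (Aᵀ * A)⁻¹ *ᵥ Aᵀ *ᵥ y
  have hadj (u : Fin n → ℝ) : u ⬝ᵥ A *ᵥ c = Aᵀ *ᵥ u ⬝ᵥ c := by
    rw [dotProduct_mulVec, mulVec_transpose]
  have hGc : (Aᵀ * A) *ᵥ c = Aᵀ *ᵥ y := by
    rw [mulVec_mulVec, mul_nonsing_inv _ hG, one_mulVec]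
  rw [dotProduct_proj_mulVec, ← dotProduct_self_eq_nsq, hadj, hadj, mulVec_mulVec, hGc]

lemma satRIP.col_dotProduct_proj_le (hΦ : satRIP Φ t δ) (hδ0 : 0 ≤ δ) (hδ : δ < 1)
    {i : Fin d} {s : Finset (Fin d)} (hi : i ∉ s) (hs : (insert i s).card ≤ t) :
    _root_.col Φ i ⬝ᵥ proj Φ s *ᵥ _root_.col Φ i ≤ δ ^ 2 / (1 - δ) := by
  have hs' : s.card ≤ t := le_trans (Finset.card_le_card (Finset.subset_insert i s)) hs
  have hG := (hΦ.posDef_gram hδ hs').det_pos.ne'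
  set τ := _root_.col Φ i ⬝ᵥ proj Φ s *ᵥ _root_.col Φ i
  set c := ((cols Φ s)ᵀ * cols Φ s)⁻¹ *ᵥ (cols Φ s)ᵀ *ᵥ _root_.col Φ i
  have hτ : τ = nsq (cols Φ s *ᵥ c) := dotProduct_proj_mulVec_eq_nsq hG.isUnit _
  have hlower : (1 - δ) * nsq c ≤ τ := hτ ▸ hΦ.le_nsq_cols_mulVec hs' c
  have hupper : τ ^ 2 ≤ δ ^ 2 * nsq c := by
    rw [show τ = _ from dotProduct_proj_mulVec s _]
    exact hΦ.sq_col_dotProduct_le hδ0 hi hs c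
  have h1δ : 0 < 1 - δ := by linarith
  rcases (hτ ▸ nsq_nonneg _ : 0 ≤ τ).eq_or_lt with hτ0 | hτ0
  · rw [← hτ0]; positivity
  · rw [le_div_iff₀ h1δ]
    nlinarith [nsq_nonneg c, mul_le_mul_of_nonneg_left hlower (sq_nonneg δ)]

end Projection

lemma one_sub_sq_div_one_sub_pos {δ : ℝ} (hδ0 : 0 ≤ δ) (hδ : δ < 1 / 2) :
    0 < 1 - δ ^ 2 / (1 - δ) := by
  rw [sub_pos, div_lt_one (by linarith)]
  nlinarith

theorem stmt14_general {n d : ℕ} (Φ : Matrix (Fin n) (Fin d) ℝ)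
    (hunit : ∀ j, nsq (_root_.col Φ j) = 1)
    (xs : Fin d → ℝ) (m ℓ : ℕ) (p : Finset (Fin d))
    (hsub : spt xs ⊆ p) (hp : p.card ≤ m + ℓ)
    (hδ : ripConst Φ (m + ℓ) < 1 / 2)
    (xh : Fin d → ℝ) (hx : leastSq Φ (Φ.mulVec xs) p xh)
    (i : Fin d) (hi : i ∈ p) (hne : xs i ≠ 0) :
    xh i ≠ 0 ∧
    (1 - ripConst Φ (m + ℓ) ^ 2 / (1 - ripConst Φ (m + ℓ))) * |xs i| ≤
      |(_root_.col Φ i ⬝ᵥ ((1 - proj Φ (p.erase i)).mulVec (_root_.col Φ i))) * xs i| ∧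
    0 < (1 - ripConst Φ (m + ℓ) ^ 2 / (1 - ripConst Φ (m + ℓ))) * |xs i| := by
  set δ := ripConst Φ (m + ℓ)
  have hΦ := satRIP_ripConst Φ (m + ℓ)
  have hδ0 : 0 ≤ δ := ripConst_nonneg Φ (m + ℓ)
  have hxs : ∀ j, j ∉ p → xs j = 0 := fun j hj => by
    by_contra h
    exact hj (hsub (Finset.mem_filter.2 ⟨Finset.mem_univ j, h⟩))
  have hτ : _root_.col Φ i ⬝ᵥ proj Φ (p.erase i) *ᵥ _root_.col Φ i ≤ δ ^ 2 / (1 - δ) :=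
    hΦ.col_dotProduct_proj_le hδ0 (by linarith) (Finset.notMem_erase i p)
      (by rwa [Finset.insert_erase hi])
  have hgap := one_sub_sq_div_one_sub_pos hδ0 hδ
  refine ⟨(hx.eq_of_satRIP hΦ (by linarith) hp hxs).symm ▸ hne, ?_,
    mul_pos hgap (abs_pos.2 hne)⟩
  rw [sub_mulVec, one_mulVec, dotProduct_sub, dotProduct_self_eq_nsq, hunit, abs_mul]
  exact mul_le_mul_of_nonneg_right ((sub_le_sub_left hτ 1).trans (le_abs_self _)) (abs_nonneg _)

/-- true features with nonzero coefficient keep a nonzero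
least-squares coefficient on any superset `p` of the support. -/
theorem stmt14 {n d : ℕ} (Φ : Matrix (Fin n) (Fin d) ℝ)
    (hunit : ∀ j, nsq (_root_.col Φ j) = 1)
    (xs : Fin d → ℝ) (m ℓ : ℕ) (p : Finset (Fin d))
    (hsub : spt xs ⊆ p) (hp : p.card ≤ m + ℓ)
    (hδ : ripConst Φ (m + ℓ) < 1 / 2)
    (xh : Fin d → ℝ) (hx : leastSq Φ (Φ.mulVec xs) p xh)
    (i : Fin d) (hi : i ∈ p) (his : i ∈ spt xs) (hne : xs i ≠ 0) :
    xh i ≠ 0 ∧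
    (1 - ripConst Φ (m + ℓ) ^ 2 / (1 - ripConst Φ (m + ℓ))) * |xs i| ≤
      |(_root_.col Φ i ⬝ᵥ ((1 - proj Φ (p.erase i)).mulVec (_root_.col Φ i))) * xs i| ∧
    0 < (1 - ripConst Φ (m + ℓ) ^ 2 / (1 - ripConst Φ (m + ℓ))) * |xs i| :=
  stmt14_general Φ hunit xs m ℓ p hsub hp hδ xh hx i hi hne
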